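/- Let d ≥ 1 and define K̂_t(z) := ∫_0^t κ(e^u|z|) du for z ∈ ℝ^d and t ≥ 0. Then lim_{t→∞} (1/t) ∫_{|z|≤1} e^{d K̂_t(z)} dz = e^{−d j_κ} · 2π^{d/2}/Γ(d/2), where 2π^{d/2}/Γ(d/2) is the surface measure of the unit sphere in ℝ^d. -/

import Mathlib

/-!
In polar coordinates with `|z| = e^{-s}`, and with `G(x) = ∫_0^x κ(e^{-v}) dv`, one has
`K̂_t(z) = G(s) - G(s - t)`, so the integral equals the area of the unit sphere times
`∫_0^∞ exp(d (G(s) - G(s - t)) - d s) ds`. Since `κ = 0` on `[1, ∞)`, `G` vanishes on `(-∞, 0]`;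
hence for `s ≤ t` the integrand is `exp(-d (s - G(s)))`, and `s - G(s) = j_κ + O(e^{-s})` because
`|1 - κ(r)| ≤ c r` for the Lipschitz constant `c`. For `s > t` the integrand is `O(e^{t - s})`.
So the radial integral is `t e^{-d j_κ} + O(1)`.
-/

open MeasureTheory Filter

noncomputable section

abbrev Ed (d : ℕ) := EuclideanSpace ℝ (Fin d)

/-- Positive definite kernel on an open set `U ⊆ ℝ^d`. -/
def PosDefKernel (d : ℕ) (U : Set (Ed d)) (G : Ed d → Ed d → ℝ) : Prop :=
  ∀ ρ : Ed d → ℝ, Continuous ρ → HasCompactSupport ρ → tsupport ρ ⊆ U →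
    0 ≤ ∫ x in U, ∫ y in U, G x y * ρ x * ρ y

/-- `K̂_t(z) = ∫_0^t κ(e^u |z|) du`. -/
def Khatt (d : ℕ) (κ : ℝ → ℝ) (t : ℝ) (z : Ed d) : ℝ :=
  ∫ u in (0:ℝ)..t, κ (Real.exp u * ‖z‖)

/-- `j_κ = ∫_0^∞ (1 − κ(e^{−t})) dt`. -/
def jkappa (κ : ℝ → ℝ) : ℝ := ∫ t in Set.Ioi (0:ℝ), (1 - κ (Real.exp (-t)))

open Real Set Metric Topology

def kappaPrimitive (κ : ℝ → ℝ) (x : ℝ) : ℝ := ∫ v in (0:ℝ)..x, κ (exp (-v))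

def radialIntegrand (d : ℕ) (κ : ℝ → ℝ) (t s : ℝ) : ℝ :=
  exp (d * (kappaPrimitive κ s - kappaPrimitive κ (s - t)) - d * s)

lemma abs_exp_sub_one_le_mul_exp_abs (x : ℝ) : |exp x - 1| ≤ |x| * exp |x| := by
  rcases le_total 0 x with hx | hx
  · have h : exp x * exp (-x) = 1 := by rw [← exp_add, add_neg_cancel, exp_zero]
    rw [abs_of_nonneg hx, abs_of_nonneg (sub_nonneg.mpr (one_le_exp hx))]
    nlinarith [add_one_le_exp (-x), exp_pos x]
  · rw [abs_of_nonpos hx, abs_of_nonpos (sub_nonpos.mpr (exp_le_one_iff.mpr hx))]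
    nlinarith [add_one_le_exp x, one_le_exp (neg_nonneg.mpr hx)]

lemma abs_integral_Ioi_sub_mul_le {f : ℝ → ℝ} {t L A B : ℝ} (ht : 0 ≤ t) (hA : 0 ≤ A)
    (hf : Continuous f) (hnear : ∀ s ∈ Ioc 0 t, |f s - L| ≤ A * exp (-s))
    (hfar : ∀ s ∈ Ioi t, |f s| ≤ B * exp (t - s)) :
    |(∫ s in Ioi 0, f s) - t * L| ≤ A + B := by
  have hfar' : ∀ s ∈ Ioi t, ‖f s‖ ≤ B * exp t * exp (-s) := fun s hs => by
    rw [mul_assoc, ← exp_add, ← sub_eq_add_neg]; exact hfar s hs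
  have hexp : ∀ a b, IntegrableOn (fun s => a * exp (-s)) (Ioi b) := fun a b =>
    (integrableOn_exp_neg_Ioi b).const_mul a
  have hIoc : IntegrableOn f (Ioc 0 t) := hf.integrableOn_Icc.mono_set Ioc_subset_Icc_self
  have hIoi : IntegrableOn f (Ioi t) :=
    (hexp _ t).mono' hf.aestronglyMeasurable.restrict ((ae_restrict_iff' measurableSet_Ioi).mpr
      (ae_of_all _ hfar'))
  have hsplit : ∫ s in Ioi 0, f s = (∫ s in Ioc 0 t, f s) + ∫ s in Ioi t, f s := by
    rw [← setIntegral_union (Ioc_disjoint_Ioi le_rfl) measurableSet_Ioi hIoc hIoi,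
      Ioc_union_Ioi_eq_Ioi ht]
  have hconst : t * L = ∫ _ in Ioc 0 t, L := by simp [ht]
  have hnear_int : |∫ s in Ioc 0 t, (f s - L)| ≤ A :=
    calc |∫ s in Ioc 0 t, (f s - L)| ≤ ∫ s in Ioc 0 t, A * exp (-s) :=
          norm_integral_le_of_norm_le (f := fun s => f s - L)
            ((hexp A 0).mono_set Ioc_subset_Ioi_self)
            ((ae_restrict_iff' measurableSet_Ioc).mpr (ae_of_all _ hnear))
      _ ≤ ∫ s in Ioi 0, A * exp (-s) :=
          setIntegral_mono_set (hexp A 0) (ae_of_all _ fun s => by positivity)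
            Ioc_subset_Ioi_self.eventuallyLE
      _ = A := by rw [integral_const_mul, integral_exp_neg_Ioi, neg_zero, exp_zero, mul_one]
  have hfar_int : |∫ s in Ioi t, f s| ≤ B :=
    calc |∫ s in Ioi t, f s| ≤ ∫ s in Ioi t, B * exp t * exp (-s) :=
          norm_integral_le_of_norm_le (hexp _ t)
            ((ae_restrict_iff' measurableSet_Ioi).mpr (ae_of_all _ hfar'))
      _ = B := by rw [integral_const_mul, integral_exp_neg_Ioi, mul_assoc, ← exp_add,
          add_neg_cancel, exp_zero, mul_one]
  rw [integral_sub hIoc (by simp)] at hnear_int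
  rw [hsplit, hconst, add_sub_right_comm]
  exact (abs_add_le _ _).trans (add_le_add hnear_int hfar_int)

lemma tendsto_inv_mul_integral_Ioi_of_exp_bounds {F : ℝ → ℝ → ℝ} {L A B : ℝ} (hA : 0 ≤ A)
    (hF : ∀ t, Continuous (F t))
    (hnear : ∀ t ≥ 0, ∀ s ∈ Ioc 0 t, |F t s - L| ≤ A * exp (-s))
    (hfar : ∀ t ≥ 0, ∀ s ∈ Ioi t, |F t s| ≤ B * exp (t - s)) :
    Tendsto (fun t => t⁻¹ * ∫ s in Ioi 0, F t s) atTop (𝓝 L) := by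
  have hbound : ∀ᶠ t in atTop, ‖t⁻¹ * (∫ s in Ioi 0, F t s) - L‖ ≤ (A + B) * t⁻¹ := by
    filter_upwards [eventually_gt_atTop 0] with t ht
    have hmul : t⁻¹ * (∫ s in Ioi 0, F t s) - L = t⁻¹ * ((∫ s in Ioi 0, F t s) - t * L) := by
      field_simp
    rw [hmul, Real.norm_eq_abs, abs_mul, abs_of_pos (inv_pos.mpr ht), mul_comm]
    gcongr
    exact abs_integral_Ioi_sub_mul_le ht.le hA (hF t) (hnear t ht.le) (hfar t ht.le)
  have hzero : Tendsto (fun t : ℝ => (A + B) * t⁻¹) atTop (𝓝 0) := by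
    simpa using tendsto_inv_atTop_zero.const_mul (A + B)
  simpa using (squeeze_zero_norm' hbound hzero).add_const L

section Kernel

variable {κ : ℝ → ℝ} {c : NNReal}

lemma LipschitzOnWith.continuous_comp_exp_neg (hlip : LipschitzOnWith c κ (Ici 0)) :
    Continuous fun v => κ (exp (-v)) :=
  hlip.continuousOn.comp_continuous (by fun_prop) fun v => (exp_pos _).le

lemma abs_one_sub_comp_exp_neg_le (hlip : LipschitzOnWith c κ (Ici 0)) (hκ0 : κ 0 = 1)
    (v : ℝ) : |1 - κ (exp (-v))| ≤ c * exp (-v) := by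
  simpa [hκ0, Real.dist_eq, abs_of_pos (exp_pos _)] using
    hlip.dist_le_mul 0 self_mem_Ici (exp (-v)) (exp_pos _).le

lemma integrableOn_one_sub_comp_exp_neg (hlip : LipschitzOnWith c κ (Ici 0)) (hκ0 : κ 0 = 1)
    (s : ℝ) : IntegrableOn (fun v => 1 - κ (exp (-v))) (Ioi s) :=
  ((integrableOn_exp_neg_Ioi s).const_mul c).mono'
    (continuous_const.sub hlip.continuous_comp_exp_neg).aestronglyMeasurable
    (ae_of_all _ (abs_one_sub_comp_exp_neg_le hlip hκ0))

lemma abs_jkappa_sub_le (hlip : LipschitzOnWith c κ (Ici 0)) (hκ0 : κ 0 = 1) {s : ℝ}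
    (hs : 0 ≤ s) : |jkappa κ - (s - kappaPrimitive κ s)| ≤ c * exp (-s) := by
  have hint := integrableOn_one_sub_comp_exp_neg hlip hκ0
  have hsplit : jkappa κ = (s - kappaPrimitive κ s) + ∫ v in Ioi s, (1 - κ (exp (-v))) := by
    rw [jkappa, ← Ioc_union_Ioi_eq_Ioi hs, setIntegral_union (Ioc_disjoint_Ioi le_rfl)
      measurableSet_Ioi ((hint 0).mono_set Ioc_subset_Ioi_self) (hint s),
      ← intervalIntegral.integral_of_le hs, intervalIntegral.integral_sub intervalIntegrable_const
      (hlip.continuous_comp_exp_neg.intervalIntegrable 0 s)]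
    simp [kappaPrimitive]
  rw [hsplit, add_sub_cancel_left]
  calc |∫ v in Ioi s, (1 - κ (exp (-v)))| ≤ ∫ v in Ioi s, c * exp (-v) :=
        norm_integral_le_of_norm_le (f := fun v => 1 - κ (exp (-v)))
          ((integrableOn_exp_neg_Ioi s).const_mul c)
          (ae_of_all _ (abs_one_sub_comp_exp_neg_le hlip hκ0))
    _ = c * exp (-s) := by rw [integral_const_mul, integral_exp_neg_Ioi]

lemma kappaPrimitive_of_nonpos (hκ1 : ∀ r, 1 ≤ r → κ r = 0) {x : ℝ} (hx : x ≤ 0) :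
    kappaPrimitive κ x = 0 := by
  have hzero : EqOn (fun v => κ (exp (-v))) 0 (uIcc x 0) := fun v hv => by
    rw [uIcc_of_le hx] at hv
    exact hκ1 _ (one_le_exp (by linarith [hv.2]))
  rw [kappaPrimitive, intervalIntegral.integral_symm, intervalIntegral.integral_congr hzero]
  simp

lemma integral_comp_exp_mul_exp_neg (hlip : LipschitzOnWith c κ (Ici 0)) (t s : ℝ) :
    ∫ u in (0:ℝ)..t, κ (exp u * exp (-s)) = kappaPrimitive κ s - kappaPrimitive κ (s - t) := by
  have hint (a b : ℝ) := hlip.continuous_comp_exp_neg.intervalIntegrable (μ := volume) a b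
  have hshift : ∀ u, exp u * exp (-s) = exp (-(s - u)) := fun u => by rw [← exp_add]; ring_nf
  simp_rw [hshift]
  rw [intervalIntegral.integral_comp_sub_left (fun w => κ (exp (-w))) s, sub_zero,
    kappaPrimitive, kappaPrimitive, intervalIntegral.integral_interval_sub_left (hint 0 s)
    (hint 0 (s - t))]

lemma kappaPrimitive_sub_le (hlip : LipschitzOnWith c κ (Ici 0)) (hκ0 : κ 0 = 1) {t s : ℝ}
    (ht : 0 ≤ t) (hts : t ≤ s) : kappaPrimitive κ s - kappaPrimitive κ (s - t) ≤ t + 2 * c := by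
  have hs := abs_le.mp (abs_jkappa_sub_le hlip hκ0 (ht.trans hts))
  have hst := abs_le.mp (abs_jkappa_sub_le hlip hκ0 (sub_nonneg.mpr hts))
  have h1 : c * exp (-s) ≤ c :=
    mul_le_of_le_one_right c.coe_nonneg (exp_le_one_iff.mpr (by linarith))
  have h2 : c * exp (-(s - t)) ≤ c :=
    mul_le_of_le_one_right c.coe_nonneg (exp_le_one_iff.mpr (by linarith))
  linarith [hs.1, hst.2]

lemma continuous_radialIntegrand (hlip : LipschitzOnWith c κ (Ici 0)) (d : ℕ) (t : ℝ) :
    Continuous (radialIntegrand d κ t) := by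
  have hG : Continuous (kappaPrimitive κ) := intervalIntegral.continuous_primitive
    (fun a b => hlip.continuous_comp_exp_neg.intervalIntegrable a b) 0
  unfold radialIntegrand
  fun_prop

lemma abs_radialIntegrand_sub_le (hlip : LipschitzOnWith c κ (Ici 0)) (hκ0 : κ 0 = 1)
    (hκ1 : ∀ r, 1 ≤ r → κ r = 0) (d : ℕ) {t s : ℝ} (hs : 0 ≤ s) (hst : s ≤ t) :
    |radialIntegrand d κ t s - exp (-d * jkappa κ)| ≤
      d * c * exp (d * c) * exp (-d * jkappa κ) * exp (-s) := by
  have hfactor : radialIntegrand d κ t s - exp (-d * jkappa κ) =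
      exp (-d * jkappa κ) * (exp (d * (jkappa κ - (s - kappaPrimitive κ s))) - 1) := by
    rw [radialIntegrand, kappaPrimitive_of_nonpos hκ1 (x := s - t) (by linarith), mul_sub_one,
      ← exp_add]
    congr 2
    ring
  set x : ℝ := d * (jkappa κ - (s - kappaPrimitive κ s))
  have hx : |x| ≤ d * c * exp (-s) := by
    rw [abs_mul, Nat.abs_cast, mul_assoc]
    exact mul_le_mul_of_nonneg_left (abs_jkappa_sub_le hlip hκ0 hs) d.cast_nonneg
  have hx' : |x| ≤ d * c :=
    hx.trans (mul_le_of_le_one_right (by positivity) (exp_le_one_iff.mpr (by linarith)))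
  rw [hfactor, abs_mul, abs_of_pos (exp_pos _)]
  calc exp (-d * jkappa κ) * |exp x - 1|
      ≤ exp (-d * jkappa κ) * (d * c * exp (-s) * exp (d * c)) := by
        gcongr
        exact (abs_exp_sub_one_le_mul_exp_abs x).trans
          (mul_le_mul hx (exp_le_exp.mpr hx') (exp_pos _).le (by positivity))
    _ = d * c * exp (d * c) * exp (-d * jkappa κ) * exp (-s) := by ring

lemma abs_radialIntegrand_le {d : ℕ} (hd : 1 ≤ d) (hlip : LipschitzOnWith c κ (Ici 0))
    (hκ0 : κ 0 = 1) {t s : ℝ} (ht : 0 ≤ t) (hts : t ≤ s) :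
    |radialIntegrand d κ t s| ≤ exp (2 * d * c) * exp (t - s) := by
  rw [radialIntegrand, abs_of_pos (exp_pos _), ← exp_add, exp_le_exp]
  have hG := mul_le_mul_of_nonneg_left (kappaPrimitive_sub_le hlip hκ0 ht hts) d.cast_nonneg
  have hd' : (1 : ℝ) ≤ d := by exact_mod_cast hd
  nlinarith

lemma tendsto_inv_mul_integral_radialIntegrand {d : ℕ} (hd : 1 ≤ d)
    (hlip : LipschitzOnWith c κ (Ici 0)) (hκ0 : κ 0 = 1) (hκ1 : ∀ r, 1 ≤ r → κ r = 0) :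
    Tendsto (fun t => t⁻¹ * ∫ s in Ioi 0, radialIntegrand d κ t s) atTop
      (𝓝 (exp (-d * jkappa κ))) :=
  tendsto_inv_mul_integral_Ioi_of_exp_bounds (by positivity) (continuous_radialIntegrand hlip d)
    (fun _ _ _ hs => abs_radialIntegrand_sub_le hlip hκ0 hκ1 d hs.1.le hs.2)
    (fun _ ht _ hs => abs_radialIntegrand_le hd hlip hκ0 ht (le_of_lt hs))

end Kernel

section Polar

variable {E F : Type*} [NormedAddCommGroup E] [NormedSpace ℝ E] [FiniteDimensional ℝ E]
  [Nontrivial E] [MeasurableSpace E] [BorelSpace E] [NormedAddCommGroup F] [NormedSpace ℝ F]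

lemma integral_closedBall_fun_norm_addHaar (μ : Measure E) [μ.IsAddHaarMeasure] (f : ℝ → F) :
    ∫ x in closedBall 0 1, f ‖x‖ ∂μ = Module.finrank ℝ E • μ.real (ball 0 1) •
      ∫ y in Ioo 0 1, y ^ (Module.finrank ℝ E - 1) • f y := by
  have hind (x : E) :
      (closedBall (0 : E) 1).indicator (fun x => f ‖x‖) x = (Iic 1).indicator f ‖x‖ := by
    by_cases h : ‖x‖ ≤ 1 <;> simp [h]
  rw [← integral_indicator measurableSet_closedBall]
  simp_rw [hind]
  rw [integral_fun_norm_addHaar μ, ← integral_Ioc_eq_integral_Ioo, ← Ioi_inter_Iic,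
    ← setIntegral_indicator measurableSet_Iic]
  congr 3 with y
  by_cases hy : y ≤ 1 <;> simp [hy]

lemma integral_Ioo_zero_one_eq_integral_Ioi_exp_neg (g : ℝ → F) :
    ∫ y in Ioo 0 1, g y = ∫ s in Ioi 0, exp (-s) • g (exp (-s)) := by
  have himage : (fun s => exp (-s)) '' Ioi 0 = Ioo 0 1 := by
    ext y
    constructor
    · rintro ⟨s, hs, rfl⟩
      exact ⟨exp_pos _, exp_lt_one_iff.mpr (neg_neg_iff_pos.mpr hs)⟩
    · rintro ⟨hy0, hy1⟩
      exact ⟨-log y, neg_pos.mpr (log_neg hy0 hy1), by simp [exp_log hy0]⟩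
  have hderiv (s : ℝ) : HasDerivWithinAt (fun s => exp (-s)) (-exp (-s)) (Ioi 0) s := by
    simpa using ((hasDerivAt_neg s).exp).hasDerivWithinAt
  rw [← himage, integral_image_eq_integral_abs_deriv_smul measurableSet_Ioi
    (fun s _ => hderiv s) (exp_injective.comp neg_injective).injOn]
  simp [abs_of_pos (exp_pos _)]

end Polar

lemma EuclideanSpace.card_mul_volume_real_ball {ι : Type*} [Fintype ι] [Nonempty ι]
    (x : EuclideanSpace ℝ ι) :
    Fintype.card ι * volume.real (ball x 1) =
      2 * π ^ ((Fintype.card ι : ℝ) / 2) / Gamma ((Fintype.card ι : ℝ) / 2) := by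
  have hn : (0 : ℝ) < Fintype.card ι / 2 := by have := Fintype.card_pos (α := ι); positivity
  have hsqrt : √π ^ Fintype.card ι = π ^ ((Fintype.card ι : ℝ) / 2) := by
    rw [sqrt_eq_rpow, ← rpow_natCast, ← rpow_mul pi_nonneg]
    ring_nf
  rw [measureReal_def, EuclideanSpace.volume_ball, ENNReal.ofReal_one, one_pow, one_mul,
    ENNReal.toReal_ofReal (by positivity), hsqrt, Gamma_add_one hn.ne']
  field_simp

lemma integral_closedBall_exp_Khatt {d : ℕ} (hd : 1 ≤ d) {κ : ℝ → ℝ} {c : NNReal}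
    (hlip : LipschitzOnWith c κ (Ici 0)) (t : ℝ) :
    ∫ z in closedBall (0 : Ed d) 1, exp (d * Khatt d κ t z) =
      d * volume.real (ball (0 : Ed d) 1) * ∫ s in Ioi 0, radialIntegrand d κ t s := by
  have : Nonempty (Fin d) := ⟨⟨0, hd⟩⟩
  unfold Khatt
  rw [integral_closedBall_fun_norm_addHaar volume
      (fun r => exp (d * ∫ u in (0:ℝ)..t, κ (exp u * r))),
    finrank_euclideanSpace_fin, integral_Ioo_zero_one_eq_integral_Ioi_exp_neg, nsmul_eq_mul,
    smul_eq_mul, ← mul_assoc]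
  congr 1
  refine setIntegral_congr_fun measurableSet_Ioi fun s _ => ?_
  rw [smul_eq_mul, smul_eq_mul, integral_comp_exp_mul_exp_neg hlip, radialIntegrand, ← mul_assoc,
    ← pow_succ', Nat.sub_add_cancel hd, ← exp_nat_mul, ← exp_add]
  ring_nf

theorem statement11_general
    (d : ℕ) (hd : 1 ≤ d)
    (κ : ℝ → ℝ) (hκlip : ∃ c : NNReal, LipschitzOnWith c κ (Set.Ici 0))
    (hκ0 : κ 0 = 1)
    (hκ1 : ∀ r : ℝ, 1 ≤ r → κ r = 0) :
    Tendsto (fun t : ℝ =>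
        t⁻¹ * ∫ z in Metric.closedBall (0 : Ed d) 1, Real.exp ((d : ℝ) * Khatt d κ t z))
      atTop
      (nhds (Real.exp (-(d : ℝ) * jkappa κ) *
        (2 * Real.pi ^ ((d : ℝ) / 2) / Real.Gamma ((d : ℝ) / 2)))) := by
  obtain ⟨c, hlip⟩ := hκlip
  have : Nonempty (Fin d) := ⟨⟨0, hd⟩⟩
  have hsphere := EuclideanSpace.card_mul_volume_real_ball (0 : Ed d)
  rw [Fintype.card_fin] at hsphere
  rw [← hsphere, mul_comm]
  refine ((tendsto_inv_mul_integral_radialIntegrand hd hlip hκ0 hκ1).const_mul _).congr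
    fun t => ?_
  rw [integral_closedBall_exp_Khatt hd hlip t]
  ring

theorem statement11
    (d : ℕ) (hd : 1 ≤ d)
    (κ : ℝ → ℝ) (hκlip : ∃ c : NNReal, LipschitzOnWith c κ (Set.Ici 0))
    (hκnn : ∀ r : ℝ, 0 ≤ r → 0 ≤ κ r) (hκ0 : κ 0 = 1)
    (hκ1 : ∀ r : ℝ, 1 ≤ r → κ r = 0)
    (hκpd : PosDefKernel d Set.univ (fun x y => κ ‖x - y‖)) :
    Tendsto (fun t : ℝ =>
        t⁻¹ * ∫ z in Metric.closedBall (0 : Ed d) 1, Real.exp ((d : ℝ) * Khatt d κ t z))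
      atTop
      (nhds (Real.exp (-(d : ℝ) * jkappa κ) *
        (2 * Real.pi ^ ((d : ℝ) / 2) / Real.Gamma ((d : ℝ) / 2)))) :=
  statement11_general d hd κ hκlip hκ0 hκ1
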